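/- arXiv:2603.29882 — 2 statements merged into one kernel-verified Lean document; each statement's English description precedes it below -/
import Mathlib

section
/- Let H_0,...,H_{m-1} be real n×n matrices with spectral norms ‖H_k‖₂ ≤ ρ₀ ρ^k for ρ₀ ≥ 1, 0 < ρ < 1, and define F(θ) = Σ_{k=0}^{m-1} (H_k e^{-ikθ} + H_k^T e^{ikθ}). Let M ≥ 2 be an integer and ε ≥ ((m-1)/M) π ρ₀ (1-ρ^m)/(1-ρ). If F(qπ/M) ⪰ ε I for all q in {0,...,M} (in the positive semidefinite ordering on Hermitian matrices), then F(θ) ⪰ 0 for all θ in [0,π]. -/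
/- Each entry e^{±ikθ} of F is k-Lipschitz in θ, so θ ↦ F(θ) is Lipschitz for the spectral norm
with constant 2 Σ k ‖H_k‖₂ ≤ 2 (m-1) ρ₀ (1-ρ^m)/(1-ρ). Every θ ∈ [0,π] lies within π/(2M) of a
sample qπ/M, hence ‖F(qπ/M) - F(θ)‖₂ ≤ ε. A Hermitian matrix is dominated by its norm times the
identity, so F(θ) ⪰ F(qπ/M) - εI ⪰ 0. -/

open Matrix
open scoped ComplexOrder

/-- F(θ) = Σ_{k=0}^{m-1} (H_k e^{-ikθ} + H_k^T e^{ikθ}). -/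
noncomputable def Ffun {n m : ℕ} (H : Fin m → Matrix (Fin n) (Fin n) ℝ) (θ : ℝ) :
    Matrix (Fin n) (Fin n) ℂ :=
  ∑ k : Fin m,
    (Complex.exp (-((k : ℕ) : ℂ) * (θ : ℂ) * Complex.I) • (H k).map (Complex.ofReal)
      + Complex.exp (((k : ℕ) : ℂ) * (θ : ℂ) * Complex.I) • ((H k)ᵀ).map (Complex.ofReal))

noncomputable def specNorm {n : ℕ} (A : Matrix (Fin n) (Fin n) ℂ) : ℝ :=
  ‖Matrix.toEuclideanCLM (𝕜 := ℂ) A‖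

theorem Matrix.conjTranspose_map_ofReal {ι : Type*} (A : Matrix ι ι ℝ) :
    (A.map Complex.ofReal)ᴴ = Aᵀ.map Complex.ofReal := by
  ext i j
  simp

theorem Ffun_isHermitian {n m : ℕ} (H : Fin m → Matrix (Fin n) (Fin n) ℝ) (θ : ℝ) :
    (Ffun H θ).IsHermitian := by
  simp only [IsHermitian, Ffun, conjTranspose_sum, conjTranspose_add, conjTranspose_smul,
    conjTranspose_map_ofReal, transpose_transpose, Complex.star_def, ← Complex.exp_conj,
    map_mul, map_neg, map_natCast, Complex.conj_ofReal, Complex.conj_I]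
  refine Finset.sum_congr rfl fun k _ => ?_
  rw [add_comm]
  ring_nf

theorem Complex.norm_exp_mul_I_sub_exp_mul_I_le (x y : ℝ) :
    ‖exp (x * I) - exp (y * I)‖ ≤ |x - y| := by
  have h : exp (x * I) - exp (y * I) = exp (y * I) * (exp (I * (x - y : ℝ)) - 1) := by
    rw [mul_sub, ← exp_add]
    push_cast
    ring_nf
  rw [h, norm_mul, norm_exp_ofReal_mul_I, one_mul]
  exact Real.norm_exp_I_mul_ofReal_sub_one_le

theorem exists_nat_le_abs_mul_div_sub_le {L θ : ℝ} {M : ℕ} (hL : 0 < L) (hM : 0 < M)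
    (hθ : θ ∈ Set.Icc 0 L) : ∃ q : ℕ, q ≤ M ∧ |q * L / M - θ| ≤ L / (2 * M) := by
  obtain ⟨hθ0, hθL⟩ := hθ
  have hM' : (0 : ℝ) < M := Nat.cast_pos.2 hM
  set x := θ * M / L with hx
  have hx0 : 0 ≤ x := by positivity
  have hxM : x ≤ M := by rw [hx, div_le_iff₀ hL]; nlinarith
  set q := ⌊x + 1 / 2⌋₊
  have hq_le : (q : ℝ) ≤ x + 1 / 2 := Nat.floor_le (by linarith)
  have hq_gt : x + 1 / 2 < q + 1 := Nat.lt_floor_add_one _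
  refine ⟨q, ?_, ?_⟩
  · have : q < M + 1 := (Nat.floor_lt (by linarith)).2 (by push_cast; linarith)
    omega
  · have hscale : q * L / M - θ = (q - x) * (L / M) := by rw [hx]; field_simp
    rw [hscale, abs_mul, abs_of_pos (show 0 < L / M by positivity)]
    calc |(q : ℝ) - x| * (L / M) ≤ 1 / 2 * (L / M) := by
          gcongr; rw [abs_sub_le_iff]; constructor <;> linarith
      _ = L / (2 * M) := by ring

theorem sum_mul_le_of_le_geom {m : ℕ} {a : Fin m → ℝ} {ρ₀ ρ : ℝ} (hρ₀ : 0 ≤ ρ₀) (hρ : 0 ≤ ρ)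
    (hρ1 : ρ < 1) (ha : ∀ k, a k ≤ ρ₀ * ρ ^ (k : ℕ)) :
    ∑ k : Fin m, k * a k ≤ (m - 1) * ρ₀ * (1 - ρ ^ m) / (1 - ρ) := by
  have hgeom : ∑ k : Fin m, ρ ^ (k : ℕ) = (1 - ρ ^ m) / (1 - ρ) := by
    rw [Fin.sum_univ_eq_sum_range (ρ ^ ·), geom_sum_eq hρ1.ne, ← neg_div_neg_eq, neg_sub, neg_sub]
  calc ∑ k : Fin m, k * a k ≤ ∑ k : Fin m, (m - 1) * ρ₀ * ρ ^ (k : ℕ) := by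
        refine Finset.sum_le_sum fun k _ => ?_
        have hk : (k : ℝ) ≤ m - 1 := by
          rw [le_sub_iff_add_le]; exact_mod_cast k.isLt
        calc (k : ℝ) * a k ≤ k * (ρ₀ * ρ ^ (k : ℕ)) := by gcongr; exact ha k
          _ ≤ (m - 1) * (ρ₀ * ρ ^ (k : ℕ)) := by gcongr
          _ = _ := by ring
    _ = (m - 1) * ρ₀ * (1 - ρ ^ m) / (1 - ρ) := by rw [← Finset.mul_sum, hgeom, mul_div_assoc]

section
open scoped Matrix.Norms.L2Operator MatrixOrder

theorem Matrix.PosSemidef.of_sub_smul_one_of_norm_sub_le {ι : Type*} [Fintype ι]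
    [DecidableEq ι] {A B : Matrix ι ι ℂ} {ε : ℝ}
    (hA : (A - (ε : ℂ) • (1 : Matrix ι ι ℂ)).PosSemidef)
    (hB : B.IsHermitian) (hAB : ‖A - B‖ ≤ ε) : B.PosSemidef := by
  have hε : (ε : ℂ) • (1 : Matrix ι ι ℂ) = algebraMap ℝ _ ε := by
    rw [Algebra.algebraMap_eq_smul_one, Complex.coe_smul]
  rw [hε] at hA
  have hAherm : IsSelfAdjoint A := by
    simpa using hA.isHermitian.isSelfAdjoint.add ((IsSelfAdjoint.all ε).algebraMap (Matrix ι ι ℂ))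
  have h1 : A - B ≤ algebraMap ℝ _ ε :=
    (IsSelfAdjoint.le_algebraMap_norm_self (hAherm.sub hB)).trans (algebraMap_mono _ hAB)
  rw [← nonneg_iff_posSemidef, ← sub_le_self_iff A]
  exact h1.trans (le_iff.2 hA)

theorem norm_Ffun_sub_le {n m : ℕ} (H : Fin m → Matrix (Fin n) (Fin n) ℝ) (θ θ' : ℝ) :
    ‖Ffun H θ - Ffun H θ'‖ ≤ 2 * |θ - θ'| * ∑ k : Fin m, k * ‖(H k).map Complex.ofReal‖ := by
  have hexp (c : ℝ) : ‖Complex.exp (c * θ * Complex.I) - Complex.exp (c * θ' * Complex.I)‖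
      ≤ |c| * |θ - θ'| := by
    simpa [← mul_sub, abs_mul] using Complex.norm_exp_mul_I_sub_exp_mul_I_le (c * θ) (c * θ')
  rw [Ffun, Ffun, ← Finset.sum_sub_distrib, Finset.mul_sum]
  refine (norm_sum_le _ _).trans (Finset.sum_le_sum fun k _ => ?_)
  have hneg : ‖Complex.exp (-(k : ℕ) * θ * Complex.I) - Complex.exp (-(k : ℕ) * θ' * Complex.I)‖
      ≤ k * |θ - θ'| := by simpa using hexp (-(k : ℕ))
  have hpos : ‖Complex.exp ((k : ℕ) * θ * Complex.I) - Complex.exp ((k : ℕ) * θ' * Complex.I)‖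
      ≤ k * |θ - θ'| := by simpa using hexp (k : ℕ)
  rw [← conjTranspose_map_ofReal, add_sub_add_comm, ← sub_smul, ← sub_smul]
  refine (norm_add_le_of_le (norm_smul_le _ _) (norm_smul_le _ _)).trans ?_
  rw [l2_opNorm_conjTranspose]
  have hA := norm_nonneg ((H k).map Complex.ofReal)
  nlinarith [mul_le_mul_of_nonneg_right hneg hA, mul_le_mul_of_nonneg_right hpos hA]

end

theorem stmt4 {n m : ℕ} (H : Fin m → Matrix (Fin n) (Fin n) ℝ)
    (ρ₀ ρ : ℝ) (hρ₀ : 1 ≤ ρ₀) (hρ0 : 0 < ρ) (hρ1 : ρ < 1)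
    (hH : ∀ k : Fin m, specNorm ((H k).map Complex.ofReal) ≤ ρ₀ * ρ ^ (k : ℕ))
    (M : ℕ) (hM : 2 ≤ M) (ε : ℝ)
    (hε : ((m : ℝ) - 1) / M * Real.pi * ρ₀ * (1 - ρ ^ m) / (1 - ρ) ≤ ε)
    (hSamples : ∀ q : ℕ, q ≤ M →
      (Ffun H (q * Real.pi / M) - (ε : ℂ) • (1 : Matrix (Fin n) (Fin n) ℂ)).PosSemidef) :
    ∀ θ ∈ Set.Icc 0 Real.pi, (Ffun H θ).PosSemidef := by
  intro θ hθ
  obtain ⟨q, hqM, hq⟩ := exists_nat_le_abs_mul_div_sub_le Real.pi_pos (by omega : 0 < M) hθ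
  refine (hSamples q hqM).of_sub_smul_one_of_norm_sub_le (Ffun_isHermitian H θ) ?_
  have hS := sum_mul_le_of_le_geom (by linarith) hρ0.le hρ1 hH
  have hS0 : 0 ≤ ∑ k : Fin m, (k : ℝ) * specNorm ((H k).map Complex.ofReal) := by
    unfold specNorm; positivity
  calc _ ≤ 2 * |q * Real.pi / M - θ| *
          ∑ k : Fin m, (k : ℝ) * specNorm ((H k).map Complex.ofReal) := norm_Ffun_sub_le H _ _
    _ ≤ 2 * (Real.pi / (2 * M)) * (((m : ℝ) - 1) * ρ₀ * (1 - ρ ^ m) / (1 - ρ)) := by gcongr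
    _ = ((m : ℝ) - 1) / M * Real.pi * ρ₀ * (1 - ρ ^ m) / (1 - ρ) := by field_simp
    _ ≤ ε := hε
end

section
/- Let h_0,...,h_{m-1} be real numbers with |h_k| ≤ ρ₀ ρ^k (ρ₀ ≥ 1, 0 < ρ < 1), F(θ) = 2 Σ_{k=0}^{m-1} h_k cos(kθ), M ≥ 2 an integer, and ε ≥ ((m-1)/M) π ρ₀ (1-ρ^m)/(1-ρ). If F(qπ/M) ≥ ε for all q ∈ {0,...,M}, then F(θ) ≥ 0 for all θ ∈ [0,π]. -/
lemma cos_lip (x y : ℝ) : |Real.cos x - Real.cos y| ≤ |x - y| := by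
  rw [Real.cos_sub_cos]
  calc |(-2) * Real.sin ((x+y)/2) * Real.sin ((x-y)/2)|
      = 2 * (|Real.sin ((x+y)/2)| * |Real.sin ((x-y)/2)|) := by
        rw [abs_mul, abs_mul]; simp [mul_assoc]
    _ ≤ 2 * (1 * |(x-y)/2|) := by
        apply mul_le_mul_of_nonneg_left _ (by norm_num)
        exact mul_le_mul (Real.abs_sin_le_one _) Real.abs_sin_le_abs
          (abs_nonneg _) zero_le_one
    _ = |x - y| := by rw [abs_div, abs_two]; ring

lemma F_lip {m : ℕ} (hm : 1 ≤ m) (h : Fin m → ℝ) (ρ₀ ρ : ℝ)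
    (hρ0 : 0 < ρ) (hρ1 : ρ < 1) (hbound : ∀ k : Fin m, |h k| ≤ ρ₀ * ρ ^ (k : ℕ))
    (a b : ℝ) :
    |(2 * ∑ k : Fin m, h k * Real.cos ((k : ℕ) * a)) -
      (2 * ∑ k : Fin m, h k * Real.cos ((k : ℕ) * b))| ≤
      2 * (((m:ℝ)-1) * ρ₀ * ((1 - ρ ^ m)/(1 - ρ))) * |a - b| := by
  have hab : (0:ℝ) ≤ |a - b| := abs_nonneg _
  have key : ∀ k : Fin m, |h k * Real.cos ((k:ℕ) * a) - h k * Real.cos ((k:ℕ) * b)|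
      ≤ ((m:ℝ)-1) * ρ₀ * ρ ^ (k:ℕ) * |a - b| := by
    intro k
    have hk : ((k:ℕ):ℝ) ≤ (m:ℝ) - 1 := by
      have := k.isLt
      have : (k:ℕ) + 1 ≤ m := this
      have : ((k:ℕ):ℝ) + 1 ≤ (m:ℝ) := by exact_mod_cast this
      linarith
    have h0k : (0:ℝ) ≤ ((k:ℕ):ℝ) := by positivity
    have hρ₀pos : 0 ≤ ρ₀ * ρ ^ (k:ℕ) := le_trans (abs_nonneg _) (hbound k)
    calc |h k * Real.cos ((k:ℕ) * a) - h k * Real.cos ((k:ℕ) * b)|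
        = |h k| * |Real.cos ((k:ℕ) * a) - Real.cos ((k:ℕ) * b)| := by
          rw [← abs_mul, mul_sub]
      _ ≤ (ρ₀ * ρ ^ (k:ℕ)) * |(k:ℕ) * a - (k:ℕ) * b| :=
          mul_le_mul (hbound k) (cos_lip _ _) (abs_nonneg _) hρ₀pos
      _ = (ρ₀ * ρ ^ (k:ℕ)) * (((k:ℕ):ℝ) * |a - b|) := by
          rw [← mul_sub, abs_mul, abs_of_nonneg h0k]
      _ ≤ (ρ₀ * ρ ^ (k:ℕ)) * (((m:ℝ)-1) * |a - b|) := by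
          apply mul_le_mul_of_nonneg_left _ hρ₀pos
          exact mul_le_mul_of_nonneg_right hk hab
      _ = ((m:ℝ)-1) * ρ₀ * ρ ^ (k:ℕ) * |a - b| := by ring
  have hsum : ∑ k : Fin m, (ρ:ℝ) ^ (k:ℕ) = (1 - ρ ^ m) / (1 - ρ) := by
    rw [Fin.sum_univ_eq_sum_range (fun i => (ρ:ℝ) ^ i), geom_sum_eq hρ1.ne]
    rw [div_eq_div_iff (by linarith) (by linarith)]
    ring
  calc |(2 * ∑ k : Fin m, h k * Real.cos ((k:ℕ) * a)) -
        (2 * ∑ k : Fin m, h k * Real.cos ((k:ℕ) * b))|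
      = 2 * |∑ k : Fin m, (h k * Real.cos ((k:ℕ) * a) - h k * Real.cos ((k:ℕ) * b))| := by
        rw [Finset.sum_sub_distrib, ← mul_sub, abs_mul]; norm_num
    _ ≤ 2 * ∑ k : Fin m, |h k * Real.cos ((k:ℕ) * a) - h k * Real.cos ((k:ℕ) * b)| := by
        have := Finset.abs_sum_le_sum_abs
          (fun k : Fin m => h k * Real.cos ((k:ℕ) * a) - h k * Real.cos ((k:ℕ) * b))
          Finset.univ
        linarith
    _ ≤ 2 * ∑ k : Fin m, ((m:ℝ)-1) * ρ₀ * ρ ^ (k:ℕ) * |a - b| := by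
        have := Finset.sum_le_sum (fun k (_ : k ∈ Finset.univ) => key k)
        linarith
    _ = 2 * (((m:ℝ)-1) * ρ₀ * ((1 - ρ ^ m)/(1 - ρ))) * |a - b| := by
        rw [← Finset.sum_mul, ← Finset.mul_sum, hsum]; ring

theorem stmt14 {m : ℕ} (h : Fin m → ℝ) (ρ₀ ρ : ℝ) (hρ₀ : 1 ≤ ρ₀)
    (hρ0 : 0 < ρ) (hρ1 : ρ < 1) (hbound : ∀ k : Fin m, |h k| ≤ ρ₀ * ρ ^ (k : ℕ))
    (M : ℕ) (hM : 2 ≤ M) (ε : ℝ)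
    (hε : ((m : ℝ) - 1) / M * Real.pi * ρ₀ * (1 - ρ ^ m) / (1 - ρ) ≤ ε)
    (hSamples : ∀ q : ℕ, q ≤ M →
      ε ≤ 2 * ∑ k : Fin m, h k * Real.cos ((k : ℕ) * (q * Real.pi / M))) :
    ∀ θ ∈ Set.Icc 0 Real.pi, 0 ≤ 2 * ∑ k : Fin m, h k * Real.cos ((k : ℕ) * θ) := by
  intro θ hθ
  obtain ⟨hθ0, hθπ⟩ := hθ
  rcases Nat.eq_zero_or_pos m with hm | hm
  · subst hm; simp
  have hπ := Real.pi_pos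
  have hMpos : (0:ℝ) < M := by
    have : (2:ℝ) ≤ M := by exact_mod_cast hM
    linarith
  have hρd : (0:ℝ) < 1 - ρ := by linarith
  have hm1 : (0:ℝ) ≤ (m:ℝ) - 1 := by
    have : (1:ℝ) ≤ m := by exact_mod_cast hm
    linarith
  have hρm : (0:ℝ) ≤ 1 - ρ ^ m := by
    have : ρ ^ m < 1 := pow_lt_one₀ hρ0.le hρ1 hm.ne'
    linarith
  set x := θ * M / Real.pi with hx
  have hx0 : 0 ≤ x := by positivity
  have hxM : x ≤ M := by
    rw [hx, div_le_iff₀ hπ]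
    nlinarith
  set q : ℤ := round x with hq
  have hq0 : 0 ≤ q := by
    have h1 := sub_half_lt_round x
    have h2 : (-1:ℝ) < (q:ℝ) := by rw [hq]; linarith
    have h3 : (-1:ℤ) < q := by exact_mod_cast h2
    omega
  have hqM : q ≤ (M:ℤ) := by
    have := round_le_add_half x
    have : (q:ℝ) < (M:ℝ) + 1 := by rw [hq]; linarith
    have : q < (M:ℤ) + 1 := by exact_mod_cast this
    omega
  set n : ℕ := q.toNat with hn
  have hnM : n ≤ M := by omega
  have hnq : ((n:ℕ):ℝ) = (q:ℝ) := by
    rw [hn]; exact_mod_cast Int.toNat_of_nonneg hq0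
  set t := (n:ℝ) * Real.pi / M with ht
  have hsamp := hSamples n hnM
  have hdist : |θ - t| ≤ Real.pi / (2 * M) := by
    have hr : |x - q| ≤ 1/2 := abs_sub_round x
    have : θ - t = (x - q) * (Real.pi / M) := by
      rw [ht, hx, hnq]
      field_simp
    rw [this, abs_mul, abs_of_pos (div_pos hπ hMpos)]
    calc |x - (q:ℝ)| * (Real.pi / M) ≤ (1/2) * (Real.pi / M) := by
          apply mul_le_mul_of_nonneg_right hr
          positivity
      _ = Real.pi / (2 * M) := by ring
  have hlip := F_lip hm h ρ₀ ρ hρ0 hρ1 hbound θ t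
  have hL : 0 ≤ 2 * (((m:ℝ)-1) * ρ₀ * ((1 - ρ ^ m)/(1 - ρ))) := by positivity
  have habs : (2 * ∑ k : Fin m, h k * Real.cos ((k:ℕ) * t)) -
      (2 * ∑ k : Fin m, h k * Real.cos ((k:ℕ) * θ)) ≤
      2 * (((m:ℝ)-1) * ρ₀ * ((1 - ρ ^ m)/(1 - ρ))) * (Real.pi / (2 * M)) := by
    have h1 : (2 * ∑ k : Fin m, h k * Real.cos ((k:ℕ) * t)) -
        (2 * ∑ k : Fin m, h k * Real.cos ((k:ℕ) * θ)) ≤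
        2 * (((m:ℝ)-1) * ρ₀ * ((1 - ρ ^ m)/(1 - ρ))) * |θ - t| := by
      have := neg_abs_le ((2 * ∑ k : Fin m, h k * Real.cos ((k:ℕ) * θ)) -
        (2 * ∑ k : Fin m, h k * Real.cos ((k:ℕ) * t)))
      linarith
    calc _ ≤ 2 * (((m:ℝ)-1) * ρ₀ * ((1 - ρ ^ m)/(1 - ρ))) * |θ - t| := h1
      _ ≤ _ := mul_le_mul_of_nonneg_left hdist hL
  have heq : 2 * (((m:ℝ)-1) * ρ₀ * ((1 - ρ ^ m)/(1 - ρ))) * (Real.pi / (2 * M)) =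
      ((m : ℝ) - 1) / M * Real.pi * ρ₀ * (1 - ρ ^ m) / (1 - ρ) := by
    field_simp
  have hsamp' : ε ≤ 2 * ∑ k : Fin m, h k * Real.cos ((k:ℕ) * t) := by
    rw [ht]; exact_mod_cast hsamp
  rw [heq] at habs
  linarith
end
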